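/- arXiv:2508.07304 — 4 statements merged into one kernel-verified Lean document; each statement's English description precedes it below -/
import Mathlib

section
/- Completeness of KC: every modal formula that is true at every world of every classical Kripke model satisfying the C-propagation condition is a theorem of the Hilbert system KC (provable via the canonical model built from maximal KC-consistent sets). -/
/-- Modal formulas: atoms, negation, conjunction, disjunction, box. -/
inductive Formula : Type where
  | atom : ℕ → Formula
  | neg : Formula → Formula
  | and : Formula → Formula → Formula
  | or : Formula → Formula → Formula
  | box : Formula → Formula

/-- φ → ψ abbreviates ¬φ ∨ ψ. -/
def Formula.imp (φ ψ : Formula) : Formula := .or (.neg φ) ψ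

/-- Classical propositional evaluation treating boxed subformulas atomically. -/
def evalT (v : Formula → Bool) : Formula → Bool
  | .atom n => v (.atom n)
  | .neg φ => ! evalT v φ
  | .and φ ψ => evalT v φ && evalT v ψ
  | .or φ ψ => evalT v φ || evalT v ψ
  | .box φ => v (.box φ)

/-- A classical propositional tautology (boxed subformulas treated as atoms). -/
def Tautology (φ : Formula) : Prop := ∀ v : Formula → Bool, evalT v φ = true

/-- The Hilbert system KC: classical tautologies, schema K, schema C,
closed under modus ponens and necessitation. -/
inductive KC : Formula → Prop where
  | taut {φ : Formula} : Tautology φ → KC φ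
  | axK (φ ψ : Formula) :
      KC (Formula.imp (.box (Formula.imp φ ψ)) (Formula.imp (.box φ) (.box ψ)))
  | axC (φ : Formula) : KC (Formula.imp φ (.box φ))
  | mp {φ ψ : Formula} : KC (Formula.imp φ ψ) → KC φ → KC ψ
  | nec {φ : Formula} : KC φ → KC (.box φ)

/-- Kripke satisfaction. -/
def Sat {W : Type} (R : W → W → Prop) (V : W → ℕ → Bool) : W → Formula → Prop
  | w, .atom n => V w n = true
  | w, .neg φ => ¬ Sat R V w φ
  | w, .and φ ψ => Sat R V w φ ∧ Sat R V w ψ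
  | w, .or φ ψ => Sat R V w φ ∨ Sat R V w ψ
  | w, .box φ => ∀ w', R w w' → Sat R V w' φ


/-- falsum -/
def fbot : Formula := .and (.atom 0) (.neg (.atom 0))

/-- Translation: boxes become `_ ∨ □⊥`. -/
def Tr : Formula → Formula
  | .atom n => .atom n
  | .neg φ => .neg (Tr φ)
  | .and φ ψ => .and (Tr φ) (Tr ψ)
  | .or φ ψ => .or (Tr φ) (Tr ψ)
  | .box φ => .or (Tr φ) (.box fbot)

lemma kc_trans {a b c : Formula} (h1 : KC (a.imp b)) (h2 : KC (b.imp c)) :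
    KC (a.imp c) := by
  refine KC.mp (KC.mp (KC.taut ?_) h1) h2
  intro v
  simp only [Formula.imp, evalT]
  cases evalT v a <;> cases evalT v b <;> cases evalT v c <;> simp

lemma boxMono {a b : Formula} (h : KC (a.imp b)) : KC ((Formula.box a).imp (.box b)) :=
  KC.mp (KC.axK a b) (KC.nec h)

lemma boxTo (a : Formula) : KC ((Formula.box a).imp (.or a (.box fbot))) := by
  have hA : KC ((Formula.neg a).imp (.box (.neg a))) := KC.axC _
  have t0 : KC (a.imp ((Formula.neg a).imp fbot)) := by
    apply KC.taut; intro v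
    simp only [Formula.imp, evalT, fbot]
    cases evalT v a <;> cases v (.atom 0) <;> simp
  have hB : KC ((Formula.box a).imp ((Formula.box (.neg a)).imp (.box fbot))) :=
    kc_trans (boxMono t0) (KC.axK (.neg a) fbot)
  refine KC.mp (KC.mp (KC.taut ?_) hA) hB
  intro v
  simp only [Formula.imp, evalT]
  cases evalT v a <;> cases v (.box a) <;> cases v (.box (.neg a)) <;>
    cases v (.box fbot) <;> simp

lemma boxFrom (a : Formula) : KC ((Formula.or a (.box fbot)).imp (.box a)) := by
  have hC : KC (a.imp (.box a)) := KC.axC a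
  have hD : KC ((Formula.box fbot).imp (.box a)) := by
    apply boxMono
    apply KC.taut; intro v
    simp only [Formula.imp, evalT, fbot]
    cases v (.atom 0) <;> simp
  refine KC.mp (KC.mp (KC.taut ?_) hC) hD
  intro v
  simp only [Formula.imp, evalT]
  cases evalT v a <;> cases v (.box a) <;> cases v (.box fbot) <;> simp

lemma kc_Tr (φ : Formula) : KC (φ.imp (Tr φ)) ∧ KC ((Tr φ).imp φ) := by
  induction φ with
  | atom n =>
      constructor <;> (apply KC.taut; intro v; simp [Formula.imp, evalT, Tr];)
  | neg φ ih =>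
      obtain ⟨h1, h2⟩ := ih
      constructor
      · refine KC.mp (KC.taut ?_) h2
        intro v; simp only [Formula.imp, evalT, Tr]
        cases evalT v φ <;> cases evalT v (Tr φ) <;> simp
      · refine KC.mp (KC.taut ?_) h1
        intro v; simp only [Formula.imp, evalT, Tr]
        cases evalT v φ <;> cases evalT v (Tr φ) <;> simp
  | and φ ψ ihφ ihψ =>
      obtain ⟨h1, h2⟩ := ihφ; obtain ⟨h3, h4⟩ := ihψ
      constructor
      · refine KC.mp (KC.mp (KC.taut ?_) h1) h3
        intro v; simp only [Formula.imp, evalT, Tr]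
        cases evalT v φ <;> cases evalT v (Tr φ) <;> cases evalT v ψ <;>
          cases evalT v (Tr ψ) <;> simp
      · refine KC.mp (KC.mp (KC.taut ?_) h2) h4
        intro v; simp only [Formula.imp, evalT, Tr]
        cases evalT v φ <;> cases evalT v (Tr φ) <;> cases evalT v ψ <;>
          cases evalT v (Tr ψ) <;> simp
  | or φ ψ ihφ ihψ =>
      obtain ⟨h1, h2⟩ := ihφ; obtain ⟨h3, h4⟩ := ihψ
      constructor
      · refine KC.mp (KC.mp (KC.taut ?_) h1) h3
        intro v; simp only [Formula.imp, evalT, Tr]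
        cases evalT v φ <;> cases evalT v (Tr φ) <;> cases evalT v ψ <;>
          cases evalT v (Tr ψ) <;> simp
      · refine KC.mp (KC.mp (KC.taut ?_) h2) h4
        intro v; simp only [Formula.imp, evalT, Tr]
        cases evalT v φ <;> cases evalT v (Tr φ) <;> cases evalT v ψ <;>
          cases evalT v (Tr ψ) <;> simp
  | box φ ih =>
      obtain ⟨h1, h2⟩ := ih
      exact ⟨kc_trans (boxMono h1) (boxTo (Tr φ)),
             kc_trans (boxFrom (Tr φ)) (boxMono h2)⟩

lemma sat_Tr (v : Formula → Bool) (ψ : Formula) :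
    Sat (fun (_ _ : Unit) => v (Formula.box fbot) = false)
      (fun _ n => v (.atom n)) () ψ ↔ evalT v (Tr ψ) = true := by
  induction ψ with
  | atom n => simp [Sat, Tr, evalT]
  | neg φ ih => simp [Sat, Tr, evalT, ih]
  | and φ ψ ihφ ihψ => simp [Sat, Tr, evalT, ihφ, ihψ]
  | or φ ψ ihφ ihψ => simp [Sat, Tr, evalT, ihφ, ihψ]
  | box φ ih =>
      simp only [Sat, Tr, evalT]
      constructor
      · intro hs
        cases hb : v (.box fbot) with
        | true => simp
        | false =>
            have := ih.mp (hs () hb)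
            simp [this]
      · intro hs w' hb
        rcases Bool.or_eq_true_iff.mp hs with h | h
        · exact ih.mpr h
        · exact absurd h (by simp [hb])


/-- Completeness of KC: every modal formula true at every world
of every classical Kripke model satisfying the C-propagation condition is a
theorem of KC. -/
theorem KC_completeness (φ : Formula)
    (h : ∀ (W : Type) (R : W → W → Prop) (V : W → ℕ → Bool),
      (∀ (ψ : Formula) (w w' : W), R w w' → Sat R V w ψ → Sat R V w' ψ) →
      ∀ w : W, Sat R V w φ) :
    KC φ := by
  have hT : Tautology (Tr φ) := by
    intro v
    have hs := h Unit (fun _ _ => v (Formula.box fbot) = false)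
      (fun _ n => v (.atom n)) (by intro ψ w w' _ hw; cases w; cases w'; exact hw) ()
    exact (sat_Tr v φ).mp hs
  exact KC.mp (kc_Tr φ).2 (KC.taut hT)
end

section
/- Soundness and completeness of KDC: a modal formula is a theorem of the Hilbert system KDC if and only if it is true at every world of every classical Kripke model whose accessibility relation is serial (every world has at least one successor) and which satisfies the C-propagation condition. -/
/-- The Hilbert system KDC: classical tautologies, schemas K, C, D,
closed under modus ponens and necessitation. -/
inductive KDC : Formula → Prop where
  | taut {φ : Formula} : Tautology φ → KDC φ
  | axK (φ ψ : Formula) :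
      KDC (Formula.imp (.box (Formula.imp φ ψ)) (Formula.imp (.box φ) (.box ψ)))
  | axC (φ : Formula) : KDC (Formula.imp φ (.box φ))
  | axD (φ : Formula) : KDC (Formula.imp (.box φ) (.neg (.box (.neg φ))))
  | mp {φ ψ : Formula} : KDC (Formula.imp φ ψ) → KDC φ → KDC ψ
  | nec {φ : Formula} : KDC φ → KDC (.box φ)

/-!
KDC proves the T axiom `□φ → φ` (from `C` for `¬φ` and `D`), so together with `C` every formula
is provably equivalent to its box-free erasure. Soundness is a routine induction on derivations.
For completeness it suffices to look at models whose accessibility relation is the identity: they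
are serial and satisfy C-propagation, and in them a formula holds exactly when its erasure does,
so validity there makes the erasure a tautology.
-/

lemma Sat_imp {W : Type} (R : W → W → Prop) (V : W → ℕ → Bool) (w : W) (φ ψ : Formula) :
    Sat R V w (φ.imp ψ) ↔ (Sat R V w φ → Sat R V w ψ) := by
  simp only [Formula.imp, Sat]
  tauto

lemma evalT_eq_true_iff_Sat {W : Type} {R : W → W → Prop} {V : W → ℕ → Bool} {w : W}
    {v : Formula → Bool} (hv : ∀ χ, v χ = true ↔ Sat R V w χ) (φ : Formula) :
    evalT v φ = true ↔ Sat R V w φ := by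
  induction φ with
  | atom n => exact hv _
  | neg φ ih => simp [evalT, Sat, ← ih]
  | and φ ψ ih₁ ih₂ => simp [evalT, Sat, ih₁, ih₂]
  | or φ ψ ih₁ ih₂ => simp [evalT, Sat, ih₁, ih₂]
  | box φ => exact hv _

lemma Sat_of_tautology {W : Type} (R : W → W → Prop) (V : W → ℕ → Bool) (w : W) {φ : Formula}
    (h : Tautology φ) : Sat R V w φ := by
  classical
  exact (evalT_eq_true_iff_Sat (fun _ => decide_eq_true_iff) φ).mp (h _)

lemma Sat_of_KDC {W : Type} {R : W → W → Prop} {V : W → ℕ → Bool}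
    (hserial : ∀ w, ∃ w', R w w') (hprop : ∀ ψ w w', R w w' → Sat R V w ψ → Sat R V w' ψ)
    {φ : Formula} (h : KDC φ) (w : W) : Sat R V w φ := by
  induction h generalizing w with
  | taut h => exact Sat_of_tautology R V w h
  | axK φ ψ => simp only [Sat_imp, Sat]; exact fun hφψ hφ w' hw => hφψ w' hw (hφ w' hw)
  | axC φ => simp only [Sat_imp, Sat]; exact fun hφ w' => (hprop φ w w' · hφ)
  | axD φ =>
    obtain ⟨w', hw⟩ := hserial w
    simp only [Sat_imp, Sat]
    exact fun hφ hnφ => hnφ w' hw (hφ w' hw)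
  | mp _ _ ih₁ ih₂ => exact (Sat_imp R V w _ _).mp (ih₁ w) (ih₂ w)
  | nec _ ih => exact fun w' _ => ih w'

lemma tautology_imp_self (φ : Formula) : Tautology (φ.imp φ) := by
  intro v
  simp only [Formula.imp, evalT]
  cases evalT v φ <;> rfl

lemma tautology_imp_trans (φ ψ χ : Formula) :
    Tautology ((φ.imp ψ).imp ((ψ.imp χ).imp (φ.imp χ))) := by
  intro v
  simp only [Formula.imp, evalT]
  cases evalT v φ <;> cases evalT v ψ <;> cases evalT v χ <;> rfl

lemma tautology_contrapose (φ ψ : Formula) :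
    Tautology ((φ.imp ψ).imp ((Formula.neg ψ).imp (.neg φ))) := by
  intro v
  simp only [Formula.imp, evalT]
  cases evalT v φ <;> cases evalT v ψ <;> rfl

lemma tautology_and_mono (φ φ' ψ ψ' : Formula) :
    Tautology ((φ.imp φ').imp ((ψ.imp ψ').imp ((Formula.and φ ψ).imp (.and φ' ψ')))) := by
  intro v
  simp only [Formula.imp, evalT]
  cases evalT v φ <;> cases evalT v φ' <;> cases evalT v ψ <;> cases evalT v ψ' <;> rfl

lemma tautology_or_mono (φ φ' ψ ψ' : Formula) :
    Tautology ((φ.imp φ').imp ((ψ.imp ψ').imp ((Formula.or φ ψ).imp (.or φ' ψ')))) := by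
  intro v
  simp only [Formula.imp, evalT]
  cases evalT v φ <;> cases evalT v φ' <;> cases evalT v ψ <;> cases evalT v ψ' <;> rfl

lemma tautology_imp_of_neg_imp_of_imp_neg (φ ψ χ : Formula) :
    Tautology (((Formula.neg φ).imp χ).imp ((ψ.imp (.neg χ)).imp (ψ.imp φ))) := by
  intro v
  simp only [Formula.imp, evalT]
  cases evalT v φ <;> cases evalT v ψ <;> cases evalT v χ <;> rfl

namespace KDC

lemma mp₂ {φ ψ χ : Formula} (h : Tautology (φ.imp (ψ.imp χ))) (hφ : KDC φ) (hψ : KDC ψ) :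
    KDC χ :=
  mp (mp (taut h) hφ) hψ

lemma imp_trans {φ ψ χ : Formula} (h₁ : KDC (φ.imp ψ)) (h₂ : KDC (ψ.imp χ)) : KDC (φ.imp χ) :=
  mp₂ (tautology_imp_trans φ ψ χ) h₁ h₂

lemma axT (φ : Formula) : KDC ((Formula.box φ).imp φ) :=
  mp₂ (tautology_imp_of_neg_imp_of_imp_neg _ _ _) (axC (.neg φ)) (axD φ)

end KDC

def Formula.eraseBox : Formula → Formula
  | .atom n => .atom n
  | .neg φ => .neg φ.eraseBox
  | .and φ ψ => .and φ.eraseBox ψ.eraseBox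
  | .or φ ψ => .or φ.eraseBox ψ.eraseBox
  | .box φ => φ.eraseBox

lemma KDC.imp_eraseBox_and_eraseBox_imp (φ : Formula) :
    KDC (φ.imp φ.eraseBox) ∧ KDC (φ.eraseBox.imp φ) := by
  induction φ with
  | atom n => exact ⟨taut (tautology_imp_self _), taut (tautology_imp_self _)⟩
  | neg φ ih =>
    exact ⟨mp (taut (tautology_contrapose _ _)) ih.2, mp (taut (tautology_contrapose _ _)) ih.1⟩
  | and φ ψ ih₁ ih₂ =>
    exact ⟨mp₂ (tautology_and_mono _ _ _ _) ih₁.1 ih₂.1,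
      mp₂ (tautology_and_mono _ _ _ _) ih₁.2 ih₂.2⟩
  | or φ ψ ih₁ ih₂ =>
    exact ⟨mp₂ (tautology_or_mono _ _ _ _) ih₁.1 ih₂.1,
      mp₂ (tautology_or_mono _ _ _ _) ih₁.2 ih₂.2⟩
  | box φ ih => exact ⟨imp_trans (axT φ) ih.1, imp_trans ih.2 (axC φ)⟩

lemma KDC.of_tautology_eraseBox {φ : Formula} (h : Tautology φ.eraseBox) : KDC φ :=
  mp (imp_eraseBox_and_eraseBox_imp φ).2 (taut h)

lemma Sat_eq_iff_evalT_eraseBox (v : Formula → Bool) (φ : Formula) :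
    Sat (· = ·) (fun w n => w (.atom n)) v φ ↔ evalT v φ.eraseBox = true := by
  induction φ generalizing v with
  | atom n => rfl
  | neg φ ih => simp [Sat, Formula.eraseBox, evalT, ih]
  | and φ ψ ih₁ ih₂ => simp [Sat, Formula.eraseBox, evalT, ih₁, ih₂]
  | or φ ψ ih₁ ih₂ => simp [Sat, Formula.eraseBox, evalT, ih₁, ih₂]
  | box φ ih => simp [Sat, Formula.eraseBox, ih]

/-- Soundness and completeness of KDC: a modal formula is a
theorem of KDC iff it is true at every world of every classical Kripke model
whose accessibility relation is serial and which satisfies C-propagation. -/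
theorem KDC_soundness_completeness (φ : Formula) :
    KDC φ ↔
      ∀ (W : Type) (R : W → W → Prop) (V : W → ℕ → Bool),
        (∀ w : W, ∃ w' : W, R w w') →
        (∀ (ψ : Formula) (w w' : W), R w w' → Sat R V w ψ → Sat R V w' ψ) →
        ∀ w : W, Sat R V w φ := by
  refine ⟨fun h W R V hserial hprop w => Sat_of_KDC hserial hprop h w, fun hvalid => ?_⟩
  refine KDC.of_tautology_eraseBox fun v => (Sat_eq_iff_evalT_eraseBox v φ).mp ?_
  exact hvalid _ (· = ·) _ (fun w => ⟨w, rfl⟩) (fun _ _ _ hw h => hw ▸ h) v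
end

section
/- Soundness and completeness of KC45: a modal formula is a theorem of the Hilbert system KC45 if and only if it is true at every world of every classical Kripke model whose accessibility relation is transitive and Euclidean and which satisfies the C-propagation condition. -/
/-- The Hilbert system KC45: classical tautologies, schemas K, C, 4, 5,
closed under modus ponens and necessitation. -/
inductive KC45 : Formula → Prop where
  | taut {φ : Formula} : Tautology φ → KC45 φ
  | axK (φ ψ : Formula) :
      KC45 (Formula.imp (.box (Formula.imp φ ψ)) (Formula.imp (.box φ) (.box ψ)))
  | axC (φ : Formula) : KC45 (Formula.imp φ (.box φ))
  | ax4 (φ : Formula) : KC45 (Formula.imp (.box φ) (.box (.box φ)))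
  | ax5 (φ : Formula) : KC45 (Formula.imp (.neg (.box φ)) (.box (.neg (.box φ))))
  | mp {φ ψ : Formula} : KC45 (Formula.imp φ ψ) → KC45 φ → KC45 ψ
  | nec {φ : Formula} : KC45 φ → KC45 (.box φ)

/-!
In KC45 every box collapses: `□ψ ↔ □⊥ ∨ ψ` is provable (from `□ψ ∧ ¬ψ`, axiom C gives `□¬ψ`,
hence `□⊥`; conversely `□⊥ → □ψ` by K and `ψ → □ψ` by C). Replacing each `□ψ` by `□⊥ ∨ ψ`
therefore turns every formula into a provably equivalent one whose only modal subformula is `□⊥`.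
A valid formula makes this translation a tautology: a valuation `v` is read as the one-world model
whose world sees itself exactly when `v` makes `□⊥` false, and such a model is trivially
transitive, Euclidean and C-propagating.
-/

namespace Formula

def falsum : Formula := .and (.atom 0) (.neg (.atom 0))

def iff (φ ψ : Formula) : Formula := .and (φ.imp ψ) (ψ.imp φ)

def unbox : Formula → Formula
  | .atom n => .atom n
  | .neg φ => .neg φ.unbox
  | .and φ ψ => .and φ.unbox ψ.unbox
  | .or φ ψ => .or φ.unbox ψ.unbox
  | .box φ => .or (.box falsum) φ.unbox

end Formula

open Formula

theorem evalT_imp (v : Formula → Bool) (φ ψ : Formula) :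
    evalT v (φ.imp ψ) = (!evalT v φ || evalT v ψ) :=
  rfl

namespace KC45

theorem of_tautology_imp {φ ψ : Formula} (h : Tautology (φ.imp ψ)) (hφ : KC45 φ) : KC45 ψ :=
  (taut h).mp hφ

theorem of_tautology_imp₂ {φ ψ χ : Formula} (h : Tautology (φ.imp (ψ.imp χ)))
    (hφ : KC45 φ) (hψ : KC45 ψ) : KC45 χ :=
  ((taut h).mp hφ).mp hψ

theorem of_tautology_imp₃ {φ ψ χ θ : Formula} (h : Tautology (φ.imp (ψ.imp (χ.imp θ))))
    (hφ : KC45 φ) (hψ : KC45 ψ) (hχ : KC45 χ) : KC45 θ :=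
  (((taut h).mp hφ).mp hψ).mp hχ

theorem box_imp_boxFalsum_or (ψ : Formula) : KC45 ((box ψ).imp (.or (box falsum) ψ)) := by
  have hψ : KC45 (ψ.imp ((neg ψ).imp falsum)) := taut fun v => by
    simp only [evalT_imp, evalT, falsum]
    cases evalT v ψ <;> cases v (atom 0) <;> rfl
  refine of_tautology_imp₃ ?_ ((axK ψ _).mp hψ.nec) (axK (neg ψ) falsum) (axC (neg ψ))
  intro v
  simp only [evalT_imp, evalT]
  cases evalT v ψ <;> cases v (box ψ) <;> cases v (box ((neg ψ).imp falsum)) <;>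
    cases v (box (neg ψ)) <;> cases v (box falsum) <;> rfl

theorem boxFalsum_or_imp_box (ψ : Formula) : KC45 ((Formula.or (box falsum) ψ).imp (box ψ)) := by
  have hfalsum : KC45 (falsum.imp ψ) := taut fun v => by
    simp only [evalT_imp, evalT, falsum]
    cases evalT v ψ <;> cases v (atom 0) <;> rfl
  refine of_tautology_imp₂ ?_ ((axK falsum ψ).mp hfalsum.nec) (axC ψ)
  intro v
  simp only [evalT_imp, evalT]
  cases evalT v ψ <;> cases v (box ψ) <;> cases v (box falsum) <;> rfl

theorem iff_unbox (φ : Formula) : KC45 (φ.iff φ.unbox) := by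
  induction φ with
  | atom n =>
    refine taut fun v => ?_
    simp only [Formula.iff, unbox, evalT_imp, evalT]
    cases v (atom n) <;> rfl
  | neg φ ih =>
    refine of_tautology_imp (fun v => ?_) ih
    simp only [Formula.iff, unbox, evalT_imp, evalT]
    cases evalT v φ <;> cases evalT v φ.unbox <;> rfl
  | and φ ψ ihφ ihψ =>
    refine of_tautology_imp₂ (fun v => ?_) ihφ ihψ
    simp only [Formula.iff, unbox, evalT_imp, evalT]
    cases evalT v φ <;> cases evalT v φ.unbox <;> cases evalT v ψ <;> cases evalT v ψ.unbox <;> rfl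
  | or φ ψ ihφ ihψ =>
    refine of_tautology_imp₂ (fun v => ?_) ihφ ihψ
    simp only [Formula.iff, unbox, evalT_imp, evalT]
    cases evalT v φ <;> cases evalT v φ.unbox <;> cases evalT v ψ <;> cases evalT v ψ.unbox <;> rfl
  | box φ ih =>
    refine of_tautology_imp₃ (fun v => ?_) (box_imp_boxFalsum_or φ) (boxFalsum_or_imp_box φ) ih
    simp only [Formula.iff, unbox, evalT_imp, evalT]
    cases evalT v φ <;> cases evalT v φ.unbox <;> cases v (box φ) <;> cases v (box falsum) <;> rfl

theorem of_tautology_unbox {φ : Formula} (h : Tautology φ.unbox) : KC45 φ := by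
  refine of_tautology_imp₂ (fun v => ?_) (iff_unbox φ) (taut h)
  simp only [Formula.iff, evalT_imp, evalT]
  cases evalT v φ <;> cases evalT v φ.unbox <;> rfl

end KC45

section Semantics

variable {W : Type} {R : W → W → Prop} {V : W → ℕ → Bool}

theorem sat_imp {w : W} {φ ψ : Formula} :
    Sat R V w (φ.imp ψ) ↔ (Sat R V w φ → Sat R V w ψ) := by
  simp only [Formula.imp, Sat, imp_iff_not_or]

open Classical in
theorem sat_of_tautology {φ : Formula} (h : Tautology φ) (w : W) : Sat R V w φ := by
  let v : Formula → Bool := fun ψ => decide (Sat R V w ψ)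
  have hevalT : ∀ χ, evalT v χ = true ↔ Sat R V w χ := by
    intro χ
    induction χ with
    | atom n => exact decide_eq_true_iff
    | box χ => exact decide_eq_true_iff
    | neg χ ih => simp only [evalT, Sat, Bool.not_eq_true', ← ih, Bool.not_eq_true]
    | and χ₁ χ₂ ih₁ ih₂ => simp only [evalT, Sat, Bool.and_eq_true, ih₁, ih₂]
    | or χ₁ χ₂ ih₁ ih₂ => simp only [evalT, Sat, Bool.or_eq_true, ih₁, ih₂]
  exact (hevalT φ).mp (h v)

theorem KC45.sat {φ : Formula} (h : KC45 φ)
    (htrans : ∀ w w' w'' : W, R w w' → R w' w'' → R w w'')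
    (heucl : ∀ w w' w'' : W, R w w' → R w w'' → R w' w'')
    (hprop : ∀ (ψ : Formula) (w w' : W), R w w' → Sat R V w ψ → Sat R V w' ψ) (w : W) :
    Sat R V w φ := by
  induction h generalizing w with
  | taut hφ => exact sat_of_tautology hφ w
  | axK φ ψ =>
    exact sat_imp.mpr fun himp => sat_imp.mpr fun hφ w' hw' =>
      sat_imp.mp (himp w' hw') (hφ w' hw')
  | axC φ => exact sat_imp.mpr fun hφ w' hw' => hprop φ w w' hw' hφ
  | ax4 φ => exact sat_imp.mpr fun hφ w' hw' w'' hw'' => hφ w'' (htrans _ _ _ hw' hw'')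
  | ax5 φ =>
    exact sat_imp.mpr fun hnot w' hw' hbox => hnot fun u hu => hbox u (heucl _ _ _ hw' hu)
  | mp _ _ ihimp ih => exact sat_imp.mp (ihimp w) (ih w)
  | nec _ ih => exact fun w' _ => ih w'

end Semantics

theorem sat_unit_iff_evalT_unbox (v : Formula → Bool) (φ : Formula) :
    Sat (fun _ _ : Unit => v (box falsum) = false) (fun _ n => v (atom n)) () φ ↔
      evalT v φ.unbox = true := by
  induction φ with
  | atom n => rfl
  | neg φ ih => simp only [Sat, unbox, evalT, ih, Bool.not_eq_true', Bool.not_eq_true]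
  | and φ ψ ihφ ihψ => simp only [Sat, unbox, evalT, ihφ, ihψ, Bool.and_eq_true]
  | or φ ψ ihφ ihψ => simp only [Sat, unbox, evalT, ihφ, ihψ, Bool.or_eq_true]
  | box φ ih =>
    simp only [Sat, unbox, evalT, ← ih, Bool.or_eq_true]
    cases v (box falsum)
    · simp only [Bool.false_eq_true, false_or, true_implies]
      exact ⟨fun h => h (), fun h _ => h⟩
    · simp only [Bool.true_eq_false, true_or, iff_true]
      exact fun _ h => h.elim

/-- Soundness and completeness of KC45: a modal formula is a
theorem of KC45 iff it is true at every world of every classical Kripke model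
whose accessibility relation is transitive and Euclidean and which satisfies
the C-propagation condition. -/
theorem KC45_soundness_completeness (φ : Formula) :
    KC45 φ ↔
      ∀ (W : Type) (R : W → W → Prop) (V : W → ℕ → Bool),
        (∀ w w' w'' : W, R w w' → R w' w'' → R w w'') →
        (∀ w w' w'' : W, R w w' → R w w'' → R w' w'') →
        (∀ (ψ : Formula) (w w' : W), R w w' → Sat R V w ψ → Sat R V w' ψ) →
        ∀ w : W, Sat R V w φ := by
  refine ⟨fun h W R V htrans heucl hprop => h.sat htrans heucl hprop, fun hvalid => ?_⟩
  refine KC45.of_tautology_unbox fun v => (sat_unit_iff_evalT_unbox v φ).mp ?_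
  exact hvalid Unit _ _ (fun _ _ _ h _ => h) (fun _ _ _ _ h => h) (fun _ _ _ _ h => h) ()
end

section
/- Characterization of Axiom C in modal pair semantics: for all partial valuations V_R and V_w, no instance φ → □φ of Axiom C (with φ ranging over □-free formulas, the instance evaluated at R as the Weak Kleene disjunction of eval V_R (¬φ) and the Boolean value of □φ) has value some false at R if and only if V_R ⊆ V_w; in particular, if V_R ⊆ V_w then for every □-free formula φ, eval V_R φ = some true implies that □φ is true at R. -/
/-!
An instance `φ → □φ` is false at `R` exactly when `φ` is true under `V_R` but not under `V_w`,
so Axiom C holds iff truth transfers from `V_R` to `V_w`. Weak Kleene evaluation is monotone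
under extension of partial valuations, which gives one direction; conversely, transferring the
truth of `p` and of `¬p` forces `V_R ⊆ V_w` on each atom `p`.
-/

/-- Propositional formulas: atoms, negation, conjunction, disjunction. -/
inductive PForm : Type where
  | atom : ℕ → PForm
  | neg : PForm → PForm
  | and : PForm → PForm → PForm
  | or : PForm → PForm → PForm

/-- Weak Kleene negation. -/
def wkNot : Option Bool → Option Bool
  | some b => some (!b)
  | none => none

/-- Weak Kleene conjunction: undefined whenever either argument is undefined. -/
def wkAnd : Option Bool → Option Bool → Option Bool
  | some a, some b => some (a && b)
  | _, _ => none

/-- Weak Kleene disjunction: undefined whenever either argument is undefined. -/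
def wkOr : Option Bool → Option Bool → Option Bool
  | some a, some b => some (a || b)
  | _, _ => none

/-- Weak Kleene evaluation of a formula under a partial valuation. -/
def wkEval (v : ℕ → Option Bool) : PForm → Option Bool
  | .atom p => v p
  | .neg φ => wkNot (wkEval v φ)
  | .and φ ψ => wkAnd (wkEval v φ) (wkEval v ψ)
  | .or φ ψ => wkOr (wkEval v φ) (wkEval v ψ)

/-- The (always defined) Boolean value of □φ at R in modal pair semantics:
□φ is true at R iff wkEval V_w φ = some true, and false otherwise. -/
def boxVal (Vw : ℕ → Option Bool) (φ : PForm) : Bool :=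
  decide (wkEval Vw φ = some true)

@[simp]
theorem wkNot_eq_some_iff {x : Option Bool} {b : Bool} : wkNot x = some b ↔ x = some (!b) := by
  cases x <;> simp [wkNot, Bool.not_eq_eq_eq_not]

theorem wkAnd_eq_some_iff {x y : Option Bool} {b : Bool} :
    wkAnd x y = some b ↔ ∃ c d, x = some c ∧ y = some d ∧ (c && d) = b := by
  cases x <;> cases y <;> simp [wkAnd]

theorem wkOr_eq_some_iff {x y : Option Bool} {b : Bool} :
    wkOr x y = some b ↔ ∃ c d, x = some c ∧ y = some d ∧ (c || d) = b := by
  cases x <;> cases y <;> simp [wkOr]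

theorem wkEval_mono {v v' : ℕ → Option Bool} (h : ∀ p b, v p = some b → v' p = some b) :
    ∀ (φ : PForm) (b : Bool), wkEval v φ = some b → wkEval v' φ = some b
  | .atom p, b, hb => h p b hb
  | .neg φ, b, hb => by
    rw [wkEval, wkNot_eq_some_iff] at hb ⊢
    exact wkEval_mono h φ _ hb
  | .and φ ψ, b, hb => by
    obtain ⟨c, d, hφ, hψ, rfl⟩ := wkAnd_eq_some_iff.mp hb
    simp only [wkEval, wkEval_mono h φ c hφ, wkEval_mono h ψ d hψ, wkAnd]
  | .or φ ψ, b, hb => by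
    obtain ⟨c, d, hφ, hψ, rfl⟩ := wkOr_eq_some_iff.mp hb
    simp only [wkEval, wkEval_mono h φ c hφ, wkEval_mono h ψ d hψ, wkOr]

theorem axiomC_instance_eq_false_iff (VR Vw : ℕ → Option Bool) (φ : PForm) :
    wkOr (wkEval VR (.neg φ)) (some (boxVal Vw φ)) = some false ↔
      wkEval VR φ = some true ∧ wkEval Vw φ ≠ some true := by
  simp [wkOr_eq_some_iff, wkEval, boxVal]

theorem axiomC_valid_iff_truth_preserved (VR Vw : ℕ → Option Bool) :
    (∀ φ : PForm, wkOr (wkEval VR (.neg φ)) (some (boxVal Vw φ)) ≠ some false) ↔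
      ∀ φ : PForm, wkEval VR φ = some true → wkEval Vw φ = some true := by
  simp only [ne_eq, axiomC_instance_eq_false_iff, not_and, not_not]

theorem truth_preserved_iff_extends (VR Vw : ℕ → Option Bool) :
    (∀ φ : PForm, wkEval VR φ = some true → wkEval Vw φ = some true) ↔
      ∀ (p : ℕ) (b : Bool), VR p = some b → Vw p = some b := by
  refine ⟨fun h p b hb => ?_, fun h φ => wkEval_mono h φ true⟩
  cases b
  · simpa [wkEval] using h (.neg (.atom p)) (by simpa [wkEval] using hb)
  · exact h (.atom p) hb

/-- Characterization of Axiom C in modal pair semantics: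
no instance φ → □φ (φ ranging over □-free formulas, evaluated at R as the Weak
Kleene disjunction of wkEval V_R (¬φ) and the Boolean value of □φ) has value
some false at R iff V_R ⊆ V_w; in particular, if V_R ⊆ V_w then every □-free
formula true at R has □φ true at R. -/
theorem wk_axiomC_characterization (VR Vw : ℕ → Option Bool) :
    ((∀ φ : PForm, wkOr (wkEval VR (.neg φ)) (some (boxVal Vw φ)) ≠ some false) ↔
      (∀ (p : ℕ) (b : Bool), VR p = some b → Vw p = some b))
    ∧ ((∀ (p : ℕ) (b : Bool), VR p = some b → Vw p = some b) →
        ∀ φ : PForm, wkEval VR φ = some true → boxVal Vw φ = true) := by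
  refine ⟨(axiomC_valid_iff_truth_preserved VR Vw).trans (truth_preserved_iff_extends VR Vw),
    fun h φ hφ => ?_⟩
  simpa [boxVal] using wkEval_mono h φ true hφ
end
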